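/- Let W be a complex 2-dimensional ℂ-linear subspace of ℂ³, regarded inside ℝ^7 ≅ ℝ ⊕ ℂ³ as {0} ⊕ W. Then: (i) the G₂ 3-form φ₀ vanishes identically on {0} ⊕ W, i.e., φ₀(u,v,w) = 0 for all u, v, w ∈ {0} ⊕ W; and (ii) for any vectors u, v ∈ W that are orthonormal with respect to the standard Hermitian inner product on ℂ³ (‖u‖ = ‖v‖ = 1 and ⟨u,v⟩_ℂ = 0), the 4-form ψ₀ = *φ₀ satisfies ψ₀(u, iu, v, iv) = 1, where u, iu, v, iv are regarded as vectors in {0} ⊕ W ⊆ ℝ^7. (This is the linear-algebra content of the statement that every complex surface in ℂ³ is coassociative in ℝ^7.) -/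

import Mathlib

/-!
Identify ℝ^7 with ℝ ⊕ ℂ³ via coordinates (x₁,…,x₇) (0-indexed as 0,…,6), where
z₁ = x₂ + ix₃, z₂ = x₄ + ix₅, z₃ = x₆ + ix₇.  A complex 2-dimensional subspace
W of ℂ³ is regarded inside ℝ^7 as {0} ⊕ W.
-/

noncomputable section

/-- The 3-form `dx_i ∧ dx_j ∧ dx_k` evaluated on vectors `(u,v,w)` of ℝ^7. -/
def dx3 (i j k : Fin 7) (u v w : Fin 7 → ℝ) : ℝ :=
  u i * (v j * w k - v k * w j) - v i * (u j * w k - u k * w j)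
    + w i * (u j * v k - u k * v j)

/-- The G₂ 3-form φ₀ = dx₁₂₃ + dx₁₄₅ + dx₁₆₇ + dx₂₄₆ − dx₂₅₇ − dx₃₄₇ − dx₃₅₆
(0-indexed coordinates). -/
def phi0 (u v w : Fin 7 → ℝ) : ℝ :=
  dx3 0 1 2 u v w + dx3 0 3 4 u v w + dx3 0 5 6 u v w + dx3 1 3 5 u v w
    - dx3 1 4 6 u v w - dx3 2 3 6 u v w - dx3 2 4 5 u v w

/-- The 4-form `dx_i ∧ dx_j ∧ dx_k ∧ dx_l` evaluated on vectors `(u,v,w,y)` of ℝ^7. -/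
def dx4 (i j k l : Fin 7) (u v w y : Fin 7 → ℝ) : ℝ :=
  Matrix.det !![u i, v i, w i, y i;
                u j, v j, w j, y j;
                u k, v k, w k, y k;
                u l, v l, w l, y l]

/-- The 4-form ψ₀ = *φ₀ = dx₄₅₆₇ + dx₂₃₆₇ + dx₂₃₄₅ + dx₁₃₅₇ − dx₁₃₄₆ − dx₁₂₅₆ − dx₁₂₄₇
(0-indexed coordinates). -/
def psi0 (u v w y : Fin 7 → ℝ) : ℝ :=
  dx4 3 4 5 6 u v w y + dx4 1 2 5 6 u v w y + dx4 1 2 3 4 u v w y + dx4 0 2 4 6 u v w y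
    - dx4 0 2 3 5 u v w y - dx4 0 1 4 5 u v w y - dx4 0 1 3 6 u v w y

/-- The embedding ℂ³ → ℝ^7 ≅ ℝ ⊕ ℂ³, z ↦ (0, z). -/
def jmap (z : EuclideanSpace ℂ (Fin 3)) : Fin 7 → ℝ :=
  ![0, (z 0).re, (z 0).im, (z 1).re, (z 1).im, (z 2).re, (z 2).im]

/-! On `ℂ³ ⊆ ℝ^7` the form `φ₀` restricts to `Re (dz₁ ∧ dz₂ ∧ dz₃)`, the real part of a
complex determinant, which vanishes on three vectors of a complex plane. The form `ψ₀` restricts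
to `ω² / 2` for the Kähler form `ω = dx₂₃ + dx₄₅ + dx₆₇`, and `ψ₀(u, iu, v, iv)` is the Gram
determinant `‖u‖²‖v‖² - |⟪u, v⟫|²`, equal to `1` on a Hermitian-orthonormal pair. -/

lemma dx4_eq_sum_dx3 (i j k l : Fin 7) (u v w y : Fin 7 → ℝ) :
    dx4 i j k l u v w y = u i * dx3 j k l v w y - v i * dx3 j k l u w y
      + w i * dx3 j k l u v y - y i * dx3 j k l u v w := by
  rw [dx4, Matrix.det_succ_row_zero, Fin.sum_univ_four]
  simp only [Fin.isValue, Fin.coe_ofNat_eq_mod, Nat.zero_mod, Nat.one_mod, pow_zero,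
    pow_one, Matrix.of_apply, Matrix.cons_val', Matrix.cons_val_zero, Matrix.cons_val_fin_one,
    Matrix.cons_val_one, Matrix.cons_val, Fin.succAbove_zero, Matrix.det_fin_three,
    Matrix.submatrix_apply, Fin.succ_zero_eq_one, Fin.succ_one_eq_two, Fin.reduceSucc,
    Fin.succAbove, Fin.castSucc_zero, Fin.castSucc_one, Fin.reduceCastSucc, Fin.lt_one_iff,
    Fin.reduceLT, Fin.reduceEq, zero_lt_one, lt_self_iff_false, ↓reduceIte, one_mul, neg_mul, dx3]
  ring

lemma phi0_jmap (a b c : EuclideanSpace ℂ (Fin 3)) :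
    phi0 (jmap a) (jmap b) (jmap c) = (Matrix.of ![a.ofLp, b.ofLp, c.ofLp]).det.re := by
  simp only [phi0, dx3, jmap, Fin.isValue, Matrix.cons_val_zero, Matrix.cons_val_one,
    Matrix.cons_val, Matrix.det_fin_three, Matrix.of_apply, Matrix.cons_val',
    Matrix.cons_val_fin_one, Complex.sub_re, Complex.add_re, Complex.mul_re, Complex.mul_im]
  ring

lemma Matrix.det_eq_zero_of_row_mem {K n : Type*} [Field K] [Fintype n] [DecidableEq n]
    (M : Matrix n n K) (W : Submodule K (n → K)) (hW : Module.finrank K W < Fintype.card n)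
    (hM : ∀ i, M i ∈ W) : M.det = 0 := by
  by_contra hdet
  have hli : LinearIndependent K (fun i => (⟨M i, hM i⟩ : W)) :=
    .of_comp W.subtype (Matrix.linearIndependent_rows_of_det_ne_zero hdet)
  exact hW.not_ge hli.fintype_card_le_finrank

lemma phi0_jmap_eq_zero_of_finrank_le_two (W : Submodule ℂ (EuclideanSpace ℂ (Fin 3)))
    (hW : Module.finrank ℂ W ≤ 2) {a b c : EuclideanSpace ℂ (Fin 3)}
    (ha : a ∈ W) (hb : b ∈ W) (hc : c ∈ W) : phi0 (jmap a) (jmap b) (jmap c) = 0 := by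
  rw [phi0_jmap, Matrix.det_eq_zero_of_row_mem _
    (W.map (WithLp.linearEquiv 2 ℂ (Fin 3 → ℂ)).toLinearMap), Complex.zero_re]
  · rw [LinearEquiv.finrank_map_eq, Fintype.card_fin]
    exact hW.trans_lt (by norm_num)
  · intro i
    fin_cases i
    exacts [W.mem_map_of_mem ha, W.mem_map_of_mem hb, W.mem_map_of_mem hc]

lemma psi0_jmap (u v : EuclideanSpace ℂ (Fin 3)) :
    psi0 (jmap u) (jmap (Complex.I • u)) (jmap v) (jmap (Complex.I • v)) =
      ‖u‖ ^ 2 * ‖v‖ ^ 2 - ‖inner ℂ u v‖ ^ 2 := by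
  simp only [psi0, dx4_eq_sum_dx3, dx3, jmap, EuclideanSpace.norm_sq_eq, PiLp.inner_apply,
    Fin.sum_univ_three, Complex.sq_norm, Complex.normSq_apply, Fin.isValue, Matrix.cons_val,
    Matrix.cons_val_zero, Matrix.cons_val_one, PiLp.smul_apply, smul_eq_mul, RCLike.inner_apply,
    Complex.mul_re, Complex.mul_im, Complex.add_re, Complex.add_im, Complex.conj_re,
    Complex.conj_im, Complex.I_re, Complex.I_im]
  ring

/-- Every complex 2-dimensional subspace W ⊆ ℂ³, regarded as {0} ⊕ W ⊆ ℝ ⊕ ℂ³ = ℝ^7,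
is coassociative: φ₀ vanishes identically on it, and ψ₀ = *φ₀ evaluates to 1 on the
oriented orthonormal frame (u, iu, v, iv) for any Hermitian-orthonormal u, v ∈ W. -/
theorem complex_surface_coassociative (W : Submodule ℂ (EuclideanSpace ℂ (Fin 3)))
    (hW : Module.finrank ℂ W = 2) :
    (∀ u ∈ W, ∀ v ∈ W, ∀ w ∈ W, phi0 (jmap u) (jmap v) (jmap w) = 0) ∧
      (∀ u ∈ W, ∀ v ∈ W, ‖u‖ = 1 → ‖v‖ = 1 → (inner ℂ u v : ℂ) = 0 →
        psi0 (jmap u) (jmap (Complex.I • u)) (jmap v) (jmap (Complex.I • v)) = 1) := by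
  refine ⟨fun u hu v hv w hw => phi0_jmap_eq_zero_of_finrank_le_two W hW.le hu hv hw,
    fun u _ v _ hu hv huv => ?_⟩
  rw [psi0_jmap, hu, hv, huv]
  norm_num

end
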